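/- arXiv:2002.12081 — 6 statements merged into one kernel-verified Lean document; each statement's English description precedes it below -/
import Mathlib

section
/- Assume there is an invertible X ∈ ℝ^{s×s} with ‖X^{−1}B_nX‖_∞ ≤ 1 for all n = 1,…,N. Then for every block vector W ∈ ℝ^{(N+1)s}, the solution of the linear system satisfies ‖M^{−1}W‖_X ≤ (#W)·‖W‖_X, where #W is the number of nonzero blocks of W. -/
/-!
Write `V = M⁻¹W` blockwise: `V_0 = W_0` and `V_n = B_n V_{n-1} + W_n`. In the coordinates
`Y_n = X⁻¹V_n` this reads `Y_n = (X⁻¹B_nX) Y_{n-1} + X⁻¹W_n`, and `‖X⁻¹B_nX‖_∞ ≤ 1` gives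
`‖Y_n‖_∞ ≤ ‖Y_{n-1}‖_∞ + ‖W_n‖_X`. Hence `‖V_n‖_X ≤ ∑_{k ≤ n} ‖W_k‖_X`, a sum in which only
the `#W` nonzero blocks contribute, each at most `‖W‖_X`. Invertibility of `M` follows from
the same block recursion with `W = 0`.
-/

open Matrix

/-- The block lower bidiagonal matrix `M` with blocks `M_{nn} = I_s`,
`M_{n,n-1} = -B_n` (for `1 ≤ n ≤ N`) and `M_{nk} = 0` otherwise. -/
noncomputable def bigM (s N : ℕ) (B : ℕ → Matrix (Fin s) (Fin s) ℝ) :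
    Matrix (Fin (N + 1) × Fin s) (Fin (N + 1) × Fin s) ℝ :=
  Matrix.of fun p q =>
    if (p.1 : ℕ) = (q.1 : ℕ) then (if p.2 = q.2 then 1 else 0)
    else if (p.1 : ℕ) = (q.1 : ℕ) + 1 then -(B (p.1 : ℕ) p.2 q.2) else 0

/-- The maximum norm `‖v‖_∞ = max_i |v_i|` of a vector. -/
noncomputable def vnormInf {s : ℕ} (v : Fin s → ℝ) : ℝ := ⨆ i, |v i|

/-- The maximum row sum norm `‖A‖_∞ = max_i ∑_j |a_{ij}|` of a matrix. -/
noncomputable def mnormInf {s : ℕ} (A : Matrix (Fin s) (Fin s) ℝ) : ℝ :=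
  ⨆ i, ∑ j, |A i j|

open Finset Function

attribute [local instance] Matrix.linftyOpNormedAddCommGroup

lemma vnormInf_eq_norm {s : ℕ} (v : Fin s → ℝ) : vnormInf v = ‖v‖ := by
  refine le_antisymm (Real.iSup_le (fun i => norm_le_pi_norm v i) (norm_nonneg v)) ?_
  refine (pi_norm_le_iff_of_nonneg (Real.iSup_nonneg fun i => abs_nonneg (v i))).2 fun i => ?_
  exact le_ciSup (f := fun i => |v i|) (Set.finite_range _).bddAbove i

lemma mnormInf_eq_linfty_opNorm {s : ℕ} (A : Matrix (Fin s) (Fin s) ℝ) : mnormInf A = ‖A‖ := by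
  have hrow : ∀ i, ∑ j, |A i j| = ((∑ j, ‖A i j‖₊ : NNReal) : ℝ) := fun i => by simp
  rw [linfty_opNorm_def]
  refine le_antisymm (Real.iSup_le (fun i => ?_) (NNReal.coe_nonneg _)) ?_
  · rw [hrow, NNReal.coe_le_coe]
    exact le_sup (f := fun i => ∑ j, ‖A i j‖₊) (mem_univ i)
  · have h0 : 0 ≤ mnormInf A := Real.iSup_nonneg fun i => sum_nonneg fun j _ => abs_nonneg _
    rw [← Real.coe_toNNReal _ h0, NNReal.coe_le_coe, Finset.sup_le_iff]
    intro i _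
    rw [← NNReal.coe_le_coe, Real.coe_toNNReal _ h0, ← hrow]
    exact le_ciSup (f := fun i => ∑ j, |A i j|) (Set.finite_range _).bddAbove i

lemma norm_inv_mulVec_mulVec_add_le {s : ℕ} {X B : Matrix (Fin s) (Fin s) ℝ} (hX : IsUnit X)
    (hB : ‖X⁻¹ * B * X‖ ≤ 1) (u w : Fin s → ℝ) :
    ‖X⁻¹ *ᵥ (B *ᵥ u + w)‖ ≤ ‖X⁻¹ *ᵥ u‖ + ‖X⁻¹ *ᵥ w‖ := by
  have hconj : X⁻¹ *ᵥ (B *ᵥ u) = (X⁻¹ * B * X) *ᵥ (X⁻¹ *ᵥ u) := by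
    rw [mulVec_mulVec, mulVec_mulVec, Matrix.mul_assoc (X⁻¹ * B),
      mul_nonsing_inv _ ((isUnit_iff_isUnit_det X).1 hX), Matrix.mul_one]
  rw [mulVec_add, hconj]
  refine (norm_add_le _ _).trans (add_le_add_left ?_ _)
  exact (linfty_opNorm_mulVec _ _).trans (mul_le_of_le_one_left (norm_nonneg _) hB)

section bigM

variable {s N : ℕ} (B : ℕ → Matrix (Fin s) (Fin s) ℝ)

lemma curry_bigM_mulVec_zero (v : Fin (N + 1) × Fin s → ℝ) :
    curry (bigM s N B *ᵥ v) 0 = curry v 0 := by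
  ext i
  simp only [curry_apply, mulVec, dotProduct, Fintype.sum_prod_type]
  rw [Fintype.sum_eq_single 0 fun m hm => sum_eq_zero fun j _ => ?_]
  · simp [bigM]
  · have : (0 : ℕ) ≠ m := fun h => hm (Fin.ext h.symm)
    simp [bigM, this]

lemma curry_bigM_mulVec_succ (v : Fin (N + 1) × Fin s → ℝ) (n : Fin N) :
    curry (bigM s N B *ᵥ v) n.succ = curry v n.succ - B (n + 1) *ᵥ curry v n.castSucc := by
  ext i
  simp only [curry_apply, mulVec, dotProduct, Fintype.sum_prod_type, Pi.sub_apply]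
  rw [Fintype.sum_eq_add n.succ n.castSucc (Fin.castSucc_lt_succ (i := n)).ne'
    fun m hm => sum_eq_zero fun j _ => ?_]
  · simp [bigM, sub_eq_add_neg, ← sum_neg_distrib]
  · have h1 : (n : ℕ) + 1 ≠ m := fun h => hm.1 (Fin.ext (by simpa using h.symm))
    have h2 : (n : ℕ) ≠ m := fun h => hm.2 (Fin.ext (by simpa using h.symm))
    simp [bigM, h1, h2]

lemma bigM_mulVec_injective : Injective (bigM s N B).mulVec := by
  intro v w h
  have hblock : ∀ n, curry v n = curry w n := by
    refine Fin.induction ?_ fun n ih => ?_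
    · rw [← curry_bigM_mulVec_zero, h, curry_bigM_mulVec_zero]
    · have := congrArg (curry · n.succ) h
      simp only [curry_bigM_mulVec_succ, ih] at this
      simpa using this
  funext p
  exact congrFun (hblock p.1) p.2

lemma isUnit_bigM : IsUnit (bigM s N B) :=
  mulVec_injective_iff_isUnit.1 (bigM_mulVec_injective B)

lemma bigM_mulVec_inv_mulVec (w : Fin (N + 1) × Fin s → ℝ) :
    bigM s N B *ᵥ ((bigM s N B)⁻¹ *ᵥ w) = w := by
  rw [mulVec_mulVec, mul_nonsing_inv _ ((isUnit_iff_isUnit_det _).1 (isUnit_bigM B)), one_mulVec]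

end bigM

lemma le_sum_Iic_of_le_add {N : ℕ} {a b : Fin (N + 1) → ℝ} (h0 : a 0 ≤ b 0)
    (hsucc : ∀ n : Fin N, a n.succ ≤ a n.castSucc + b n.succ) (n : Fin (N + 1)) :
    a n ≤ ∑ k ∈ Iic n, b k := by
  induction n using Fin.induction with
  | zero => rwa [← bot_eq_zero, Iic_bot, sum_singleton]
  | succ n ih =>
    have hIic : Iic n.succ = insert n.succ (Iic n.castSucc) := by
      ext k; simp [Fin.le_iff_val_le_val, Fin.ext_iff]; omega
    rw [hIic, sum_insert (by simp)]
    linarith [hsucc n]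

lemma sum_le_card_ne_zero_mul {ι α : Type*} [Fintype ι] [Zero α] {a : ι → ℝ} {W : ι → α}
    {c : ℝ} (ha : ∀ k, W k = 0 → a k = 0) (hc : ∀ k, a k ≤ c) :
    ∑ k, a k ≤ Nat.card {k // W k ≠ 0} * c := by
  classical
  rw [← sum_filter_of_ne fun k _ hk => mt (ha k) hk, Nat.card_eq_fintype_card,
    Fintype.card_subtype, ← nsmul_eq_mul]
  exact sum_le_card_nsmul _ _ _ fun k _ => hc k

theorem stmt3_general (s N : ℕ)
    (B : ℕ → Matrix (Fin s) (Fin s) ℝ)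
    (X : Matrix (Fin s) (Fin s) ℝ) (hX : IsUnit X)
    (hB : ∀ n : ℕ, 1 ≤ n → n ≤ N → mnormInf (X⁻¹ * B n * X) ≤ 1)
    (W : Fin (N + 1) → Fin s → ℝ) :
    (⨆ n : Fin (N + 1),
        vnormInf (X⁻¹ *ᵥ fun i => ((bigM s N B)⁻¹ *ᵥ fun p => W p.1 p.2) (n, i)))
      ≤ (Nat.card {n : Fin (N + 1) // W n ≠ 0} : ℝ) *
          ⨆ n : Fin (N + 1), vnormInf (X⁻¹ *ᵥ W n) := by
  have hV := bigM_mulVec_inv_mulVec B fun p => W p.1 p.2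
  set V := (bigM s N B)⁻¹ *ᵥ fun p => W p.1 p.2
  have hV0 : curry V 0 = W 0 := by rw [← curry_bigM_mulVec_zero, hV]; rfl
  have hVsucc (n : Fin N) : curry V n.succ = B (n + 1) *ᵥ curry V n.castSucc + W n.succ := by
    have h := curry_bigM_mulVec_succ B V n
    rw [hV] at h
    exact eq_add_of_sub_eq' h.symm
  have hstep (n : Fin N) :
      ‖X⁻¹ *ᵥ curry V n.succ‖ ≤ ‖X⁻¹ *ᵥ curry V n.castSucc‖ + ‖X⁻¹ *ᵥ W n.succ‖ := by
    rw [hVsucc]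
    exact norm_inv_mulVec_mulVec_add_le hX
      (mnormInf_eq_linfty_opNorm _ ▸ hB _ n.succ_pos n.isLt) _ _
  simp only [vnormInf_eq_norm]
  refine ciSup_le fun n => ?_
  calc ‖X⁻¹ *ᵥ curry V n‖ ≤ ∑ k ∈ Iic n, ‖X⁻¹ *ᵥ W k‖ :=
        le_sum_Iic_of_le_add (a := fun n => ‖X⁻¹ *ᵥ curry V n‖) (by rw [hV0]) hstep n
    _ ≤ ∑ k, ‖X⁻¹ *ᵥ W k‖ := sum_le_univ_sum_of_nonneg fun k => norm_nonneg _
    _ ≤ _ := sum_le_card_ne_zero_mul (fun k hk => by simp [hk])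
      fun k => le_ciSup (f := fun n => ‖X⁻¹ *ᵥ W n‖) (Set.finite_range _).bddAbove k

/-- if there is an invertible `X` with `‖X⁻¹ B_n X‖_∞ ≤ 1` for
`n = 1,…,N`, then for every block vector `W`, the solution `M⁻¹W` of the linear
system satisfies `‖M⁻¹W‖_X ≤ (#W)·‖W‖_X`, where `#W` is the number of nonzero
blocks of `W`, `‖W_n‖_X = ‖X⁻¹W_n‖_∞` and `‖W‖_X = max_n ‖W_n‖_X`. -/
theorem stmt3 (s N : ℕ) (hs : 1 ≤ s) (hN : 1 ≤ N)
    (B : ℕ → Matrix (Fin s) (Fin s) ℝ)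
    (X : Matrix (Fin s) (Fin s) ℝ) (hX : IsUnit X)
    (hB : ∀ n : ℕ, 1 ≤ n → n ≤ N → mnormInf (X⁻¹ * B n * X) ≤ 1)
    (W : Fin (N + 1) → Fin s → ℝ) :
    (⨆ n : Fin (N + 1),
        vnormInf (X⁻¹ *ᵥ fun i => ((bigM s N B)⁻¹ *ᵥ fun p => W p.1 p.2) (n, i)))
      ≤ (Nat.card {n : Fin (N + 1) // W n ≠ 0} : ℝ) *
          ⨆ n : Fin (N + 1), vnormInf (X⁻¹ *ᵥ W n) :=
  stmt3_general s N B X hX hB W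
end

section
/- Let the nodes c ∈ ℝ^s be symmetric with parameter ζ ∈ ℝ, i.e. Πc = ζ·1 − c. Then for every q ∈ ℕ, Π V_q(c) = V_q(c) Δ_q 𝒫_q^ζ. -/
/-!
Row `i` of `V_q(c)` lists the monomials `1, cᵢ, …, cᵢ^{q-1}`. Left multiplication by `Π`
reverses the rows, so `Π V_q(c) = V_q(Πc) = V_q(ζ - c)`. On the other side, right
multiplication by `Δ_q` substitutes `x ↦ -x` in the monomials, and by the binomial theorem
right multiplication by `𝒫_q^ζ` substitutes `x ↦ x + ζ`; hence `V_q(c) Δ_q 𝒫_q^ζ = V_q(-c + ζ)`.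
-/

open Matrix

/-- The Vandermonde matrix `V_q(c) ∈ ℝ^{s×q}` with entries `c_i^{j-1}`. -/
noncomputable def vand {s : ℕ} (c : Fin s → ℝ) (q : ℕ) : Matrix (Fin s) (Fin q) ℝ :=
  Matrix.of fun i j => c i ^ (j : ℕ)

/-- The flip permutation matrix `Π ∈ ℝ^{s×s}`, with `Π_{ij} = 1` iff `j = s+1-i`. -/
noncomputable def flipPerm (s : ℕ) : Matrix (Fin s) (Fin s) ℝ :=
  Matrix.of fun i j => if (i : ℕ) + (j : ℕ) = s - 1 then 1 else 0

/-- The diagonal sign matrix `Δ_q` with diagonal entries `(-1)^{i-1}`. -/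
noncomputable def deltaSign (q : ℕ) : Matrix (Fin q) (Fin q) ℝ :=
  Matrix.of fun i j => if i = j then (-1 : ℝ) ^ (i : ℕ) else 0

/-- The generalized Pascal matrix `𝒫_q^ζ` with entries `C(j-1,i-1)·ζ^{j-i}`
for `i ≤ j` and `0` otherwise. -/
noncomputable def pascalZ (q : ℕ) (ζ : ℝ) : Matrix (Fin q) (Fin q) ℝ :=
  Matrix.of fun i j => ((j : ℕ).choose (i : ℕ) : ℝ) * ζ ^ ((j : ℕ) - (i : ℕ))

theorem flipPerm_eq_one_submatrix (s : ℕ) :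
    flipPerm s = (1 : Matrix (Fin s) (Fin s) ℝ).submatrix Fin.rev (Equiv.refl _) := by
  ext i j
  simp only [flipPerm, of_apply, submatrix_apply, Equiv.refl_apply, one_apply, Fin.ext_iff,
    Fin.val_rev]
  have := i.isLt
  refine if_congr ?_ rfl rfl
  constructor <;> intro <;> omega

theorem flipPerm_mul {s : ℕ} {n : Type*} (A : Matrix (Fin s) n ℝ) :
    flipPerm s * A = A.submatrix Fin.rev id := by
  rw [flipPerm_eq_one_submatrix, one_submatrix_mul]
  rfl

theorem flipPerm_mulVec {s : ℕ} (v : Fin s → ℝ) : flipPerm s *ᵥ v = v ∘ Fin.rev := by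
  rw [flipPerm_eq_one_submatrix, submatrix_mulVec_equiv, one_mulVec]
  rfl

theorem vand_submatrix {s t : ℕ} (c : Fin s → ℝ) (q : ℕ) (f : Fin t → Fin s) :
    (vand c q).submatrix f id = vand (c ∘ f) q :=
  rfl

theorem flipPerm_mul_vand {s : ℕ} (c : Fin s → ℝ) (q : ℕ) :
    flipPerm s * vand c q = vand (flipPerm s *ᵥ c) q := by
  rw [flipPerm_mul, vand_submatrix, flipPerm_mulVec]

theorem deltaSign_eq_diagonal (q : ℕ) :
    deltaSign q = diagonal fun k : Fin q => (-1 : ℝ) ^ (k : ℕ) := by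
  ext k l
  simp only [deltaSign, of_apply, diagonal_apply]

theorem vand_mul_deltaSign {s : ℕ} (c : Fin s → ℝ) (q : ℕ) :
    vand c q * deltaSign q = vand (-c) q := by
  ext i j
  rw [deltaSign_eq_diagonal, mul_diagonal]
  simp only [vand, of_apply, Pi.neg_apply]
  ring

theorem vand_mul_pascalZ {s : ℕ} (c : Fin s → ℝ) (q : ℕ) (ζ : ℝ) :
    vand c q * pascalZ q ζ = vand (c + fun _ => ζ) q := by
  ext i k
  have hk : (k : ℕ) + 1 ≤ q := k.isLt
  simp only [mul_apply, vand, pascalZ, of_apply, Pi.add_apply, add_pow]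
  rw [Fin.sum_univ_eq_sum_range (fun j => c i ^ j * ((k : ℕ).choose j * ζ ^ ((k : ℕ) - j))) q,
    ← Finset.sum_subset (Finset.range_subset_range.mpr hk)]
  · exact Finset.sum_congr rfl fun j _ => by ring
  · intro j _ hj
    rw [Finset.mem_range, not_lt] at hj
    simp [Nat.choose_eq_zero_of_lt (Nat.lt_of_succ_le hj)]

/-- if the nodes `c` are symmetric with parameter `ζ`,
i.e. `Πc = ζ·1 - c`, then `Π V_q(c) = V_q(c) Δ_q 𝒫_q^ζ` for every `q`. -/
theorem stmt9 (s : ℕ) (c : Fin s → ℝ) (ζ : ℝ)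
    (hsym : flipPerm s *ᵥ c = fun i => ζ - c i) (q : ℕ) :
    flipPerm s * vand c q = vand c q * deltaSign q * pascalZ q ζ := by
  rw [flipPerm_mul_vand, hsym, vand_mul_deltaSign, vand_mul_pascalZ]
  congr 1
  ext i
  simp only [Pi.add_apply, Pi.neg_apply]
  ring
end

section
/- For every q ∈ ℕ and every matrix M ∈ ℝ^{q×q}, there exists a matrix W ∈ ℝ^{q×q} solving the equation 𝒫_qᵀ W 𝒫_q − W = 𝒫_qᵀ M 𝒫_q Ẽ_q + Ẽ_qᵀ M. -/
/-!
Write `E = etil q`. Its powers are `(E ^ k) i (i + k) = k! * C(i + k, i)`, so `E` is nilpotent and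
`P = pascal q = exp E`. Hence `Φ W = Pᵀ * W * P` is `exp Λ` for the nilpotent operator
`Λ W = Eᵀ * W + W * E`, and `exp Λ - 1 = Λ * c` with `c = 1 + Λ / 2! + Λ² / 3! + ⋯` a unit,
so every `Λ M` lies in the range of `Φ - 1`. As `E` commutes with `P = exp E`, the right-hand side is
`(Φ - 1) (M * E) + Λ M`, and `W = M * E + c⁻¹ (M)` solves the equation.
-/

open Matrix

/-- The upper triangular Pascal matrix `𝒫_q` with entries `C(j-1, i-1)`. -/
noncomputable def pascal (q : ℕ) : Matrix (Fin q) (Fin q) ℝ :=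
  Matrix.of fun i j => ((j : ℕ).choose (i : ℕ) : ℝ)

/-- The nilpotent matrix `Ẽ_q` whose only nonzero entries are `(Ẽ_q)_{i,i+1} = i`. -/
noncomputable def etil (q : ℕ) : Matrix (Fin q) (Fin q) ℝ :=
  Matrix.of fun i j => if (j : ℕ) = (i : ℕ) + 1 then ((i : ℕ) + 1 : ℝ) else 0

open scoped Nat
open Finset LinearMap

namespace IsNilpotent

variable {A : Type*} [Ring A] [Algebra ℚ A]

theorem commute_exp_self (a : A) : Commute a (exp a) :=
  Commute.sum_right _ _ _ fun i _ => ((Commute.refl a).pow_right i).smul_right _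

theorem exists_exp_sub_one_mul_eq {a : A} (ha : IsNilpotent a) :
    ∃ u : A, (exp a - 1) * u = a := by
  obtain ⟨n, hn⟩ := ha
  set d := ∑ i ∈ range n, ((i + 2)! : ℚ)⁻¹ • a ^ i
  have hexp : exp a - 1 = a * (1 + a * d) := by
    rw [exp_eq_sum (pow_eq_zero_of_le (by omega : n ≤ n + 2) hn), sum_range_succ',
      sum_range_succ']
    simp only [pow_succ', zero_add, Nat.factorial_one, Nat.cast_one, inv_one, pow_zero, mul_one,
      one_smul, Nat.factorial_zero, add_sub_cancel_right, mul_sum, Algebra.mul_smul_comm, mul_add,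
      d]
    exact add_comm _ _
  have hunit : IsUnit (1 + a * d) :=
    (Commute.isNilpotent_mul_right
      (Commute.sum_right _ _ _ fun i _ => ((Commute.refl a).pow_right i).smul_right _)
      ⟨n, hn⟩).isUnit_one_add
  exact ⟨↑hunit.unit⁻¹, by rw [hexp, mul_assoc, hunit.mul_val_inv, mul_one]⟩

theorem mulLeft {a : A} (ha : IsNilpotent a) : IsNilpotent (LinearMap.mulLeft ℚ a) :=
  ha.map (Algebra.lmul ℚ A)

theorem mulRight {a : A} (ha : IsNilpotent a) : IsNilpotent (LinearMap.mulRight ℚ a) := by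
  obtain ⟨k, hk⟩ := ha
  exact ⟨k, by rw [pow_mulRight, hk, mulRight_zero_eq_zero]⟩

theorem mulLeft_add_mulRight {a b : A} (ha : IsNilpotent a) (hb : IsNilpotent b) :
    IsNilpotent (LinearMap.mulLeft ℚ a + LinearMap.mulRight ℚ b) :=
  (commute_mulLeft_right a b).isNilpotent_add ha.mulLeft hb.mulRight

theorem exp_mulLeft {a : A} (ha : IsNilpotent a) :
    exp (LinearMap.mulLeft ℚ a) = LinearMap.mulLeft ℚ (exp a) :=
  (map_exp ha (Algebra.lmul ℚ A)).symm

theorem exp_mulRight {a : A} (ha : IsNilpotent a) :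
    exp (LinearMap.mulRight ℚ a) = LinearMap.mulRight ℚ (exp a) := by
  obtain ⟨k, hk⟩ := ha
  have hk' : LinearMap.mulRight ℚ a ^ k = 0 := by
    rw [pow_mulRight, hk, mulRight_zero_eq_zero]
  ext x
  simp [exp_eq_sum hk, exp_eq_sum hk', pow_mulRight, mul_sum]

theorem exp_mulLeft_add_mulRight_apply {a b : A} (ha : IsNilpotent a) (hb : IsNilpotent b)
    (x : A) : exp (LinearMap.mulLeft ℚ a + LinearMap.mulRight ℚ b) x = exp a * x * exp b := by
  rw [exp_add_of_commute (commute_mulLeft_right a b) ha.mulLeft hb.mulRight, exp_mulLeft ha,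
    exp_mulRight hb, Module.End.mul_apply, mulLeft_apply, mulRight_apply, mul_assoc]

theorem exp_transpose {n R : Type*} [Fintype n] [DecidableEq n] [CommRing R] [Module ℚ R]
    {M : Matrix n n R} (hM : IsNilpotent M) : exp Mᵀ = (exp M)ᵀ := by
  obtain ⟨k, hk⟩ := hM
  rw [exp_eq_sum hk, exp_eq_sum (k := k) (by rw [← transpose_pow, hk, transpose_zero]),
    transpose_sum]
  simp only [transpose_smul, transpose_pow]

end IsNilpotent

theorem etil_pow_apply (q k : ℕ) (i j : Fin q) :
    (etil q ^ k) i j = if (j : ℕ) = i + k then (k ! * (j : ℕ).choose i : ℝ) else 0 := by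
  induction k generalizing i with
  | zero => by_cases h : (j : ℕ) = i <;> simp [one_apply, Fin.ext_iff, h, eq_comm]
  | succ k ih =>
    have hE (a b : Fin q) : etil q a b = if (b : ℕ) = a + 1 then ((a : ℕ) + 1 : ℝ) else 0 := rfl
    rw [pow_succ', mul_apply]
    simp only [hE, ite_mul, zero_mul]
    by_cases hi : (i : ℕ) + 1 < q
    · have hm (m : Fin q) : (m : ℕ) = i + 1 ↔ m = ⟨i + 1, hi⟩ := by simp [Fin.ext_iff]
      simp only [hm, sum_ite_eq', mem_univ, if_true, ih]
      by_cases hj : (j : ℕ) = i + (k + 1)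
      · have hchoose : ((j : ℕ).choose (i + 1) * (i + 1) : ℝ) = (j : ℕ).choose i * (k + 1) := by
          exact_mod_cast (Nat.choose_succ_right_eq (j : ℕ) i).trans
            (by rw [show (j : ℕ) - i = k + 1 by omega])
        rw [if_pos (by omega), if_pos hj, Nat.factorial_succ]
        push_cast
        linear_combination (k ! : ℝ) * hchoose
      · rw [if_neg (by omega), if_neg hj, mul_zero]
    · rw [if_neg (by omega)]
      exact sum_eq_zero fun m _ => if_neg (by omega)

theorem etil_pow_self (q : ℕ) : etil q ^ q = 0 := by
  ext i j
  rw [etil_pow_apply, if_neg (by omega), Matrix.zero_apply]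

theorem isNilpotent_etil (q : ℕ) : IsNilpotent (etil q) :=
  ⟨q, etil_pow_self q⟩

theorem pascal_eq_exp (q : ℕ) : pascal q = IsNilpotent.exp (etil q) := by
  ext i j
  rw [IsNilpotent.exp_eq_sum (etil_pow_self q), Matrix.sum_apply]
  simp only [Matrix.smul_apply, etil_pow_apply, smul_ite, smul_zero, Rat.smul_def]
  by_cases hij : (i : ℕ) ≤ j
  · rw [sum_eq_single_of_mem ((j : ℕ) - i) (mem_range.2 (by omega))
      fun k _ hk => if_neg (by omega), if_pos (by omega)]
    push_cast
    rw [inv_mul_cancel_left₀ (by positivity)]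
    rfl
  · rw [sum_eq_zero fun k _ => if_neg (by omega)]
    simp [pascal, Nat.choose_eq_zero_of_lt (not_le.1 hij)]

open IsNilpotent

/-- for every `q` and every `M ∈ ℝ^{q×q}` the equation
`𝒫_qᵀ W 𝒫_q - W = 𝒫_qᵀ M 𝒫_q Ẽ_q + Ẽ_qᵀ M` has a solution `W ∈ ℝ^{q×q}`. -/
theorem stmt13 (q : ℕ) (M : Matrix (Fin q) (Fin q) ℝ) :
    ∃ W : Matrix (Fin q) (Fin q) ℝ,
      (pascal q)ᵀ * W * pascal q - W
        = (pascal q)ᵀ * M * pascal q * etil q + (etil q)ᵀ * M := by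
  have hE := isNilpotent_etil q
  have hET : IsNilpotent (etil q)ᵀ := isNilpotent_transpose_iff.2 hE
  obtain ⟨u, hu⟩ := exists_exp_sub_one_mul_eq (hET.mulLeft_add_mulRight hE)
  have hΛ : (pascal q)ᵀ * u M * pascal q - u M = (etil q)ᵀ * M + M * etil q := by
    rw [pascal_eq_exp, ← exp_transpose hE, ← exp_mulLeft_add_mulRight_apply hET hE]
    exact congr($hu M)
  have hEP : (pascal q)ᵀ * (M * etil q) * pascal q = (pascal q)ᵀ * M * pascal q * etil q := by
    simp only [mul_assoc, pascal_eq_exp, (commute_exp_self (etil q)).eq]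
  refine ⟨M * etil q + u M, ?_⟩
  rw [mul_add, add_mul, add_sub_add_comm, hΛ, hEP]
  abel
end

section
/- Let q ∈ ℕ and let U ∈ ℝ^{q×q} satisfy 𝒫_q U 𝒫_qᵀ = U and Ẽ_q U + U Ẽ_qᵀ = 0. Then for every M ∈ ℝ^{q×q} the trace orthogonality tr(Uᵀ(𝒫_qᵀ M 𝒫_q Ẽ_q + Ẽ_qᵀ M)) = 0 holds. -/
/-!
In the monomial basis of polynomials of degree `< q`, `Ẽ_q` is the matrix of `d/dx` and `𝒫_q`
that of the shift `p(x) ↦ p(x + 1)`, so the two matrices commute. By cyclicity of the trace and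
`𝒫_q Uᵀ 𝒫_qᵀ = Uᵀ`, the first summand has trace `tr(M Ẽ_q Uᵀ)`, while `Uᵀ Ẽ_qᵀ = -Ẽ_q Uᵀ` turns
the second one into `-tr(M Ẽ_q Uᵀ)`.
-/

open Matrix

theorem Matrix.trace_transpose_mul_add_eq_zero_of_commute {n R : Type*} [Fintype n] [CommRing R]
    {P E U : Matrix n n R} (hPE : Commute P E) (hPU : P * U * Pᵀ = U)
    (hEU : E * U + U * Eᵀ = 0) (M : Matrix n n R) :
    trace (Uᵀ * (Pᵀ * M * P * E + Eᵀ * M)) = 0 := by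
  have hPU' : P * Uᵀ * Pᵀ = Uᵀ := by
    simpa [transpose_mul, Matrix.mul_assoc] using congrArg transpose hPU
  have hEU' : Uᵀ * Eᵀ = -(E * Uᵀ) := by
    rw [eq_neg_iff_add_eq_zero]
    simpa using congrArg transpose hEU
  have h_conj : trace (Uᵀ * (Pᵀ * M * P * E)) = trace (M * (E * Uᵀ)) :=
    calc trace (Uᵀ * (Pᵀ * M * P * E)) = trace ((Uᵀ * Pᵀ) * (M * (P * E))) := by
          simp only [Matrix.mul_assoc]
      _ = trace (M * (E * (P * Uᵀ * Pᵀ))) := by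
          rw [trace_mul_comm, hPE.eq]
          simp only [Matrix.mul_assoc]
      _ = trace (M * (E * Uᵀ)) := by rw [hPU']
  have h_skew : trace (Uᵀ * (Eᵀ * M)) = -trace (M * (E * Uᵀ)) := by
    rw [← Matrix.mul_assoc, trace_mul_comm, hEU', Matrix.mul_neg, trace_neg]
  rw [Matrix.mul_add, trace_add, h_conj, h_skew, add_neg_cancel]

theorem commute_pascal_etil (q : ℕ) : Commute (pascal q) (etil q) := by
  ext i ⟨j, hj⟩
  simp only [mul_apply, pascal, etil, of_apply]
  rw [Fin.sum_univ_eq_sum_range (fun k => (k.choose i : ℝ) * if j = k + 1 then (k + 1 : ℝ) else 0),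
    Fin.sum_univ_eq_sum_range
      (fun k => (if k = (i : ℕ) + 1 then ((i : ℕ) + 1 : ℝ) else 0) * (j.choose k : ℝ))]
  simp only [ite_mul, zero_mul, mul_ite, mul_zero, Finset.sum_ite_eq', Finset.mem_range]
  cases j with
  | zero => simp
  | succ j =>
    simp only [Nat.add_right_cancel_iff, Finset.sum_ite_eq, Finset.mem_range,
      (by omega : j < q), if_true]
    split_ifs with hi
    · exact_mod_cast (by rw [mul_comm, Nat.add_one_mul_choose_eq, mul_comm] :
        j.choose i * (j + 1) = ((i : ℕ) + 1) * (j + 1).choose ((i : ℕ) + 1))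
    · rw [Nat.choose_eq_zero_of_lt (by omega), Nat.cast_zero, zero_mul]

/-- if `U` satisfies `𝒫_q U 𝒫_qᵀ = U` and `Ẽ_q U + U Ẽ_qᵀ = 0`, then
for every `M`, `tr(Uᵀ(𝒫_qᵀ M 𝒫_q Ẽ_q + Ẽ_qᵀ M)) = 0`. -/
theorem stmt14 (q : ℕ) (U : Matrix (Fin q) (Fin q) ℝ)
    (hU₁ : pascal q * U * (pascal q)ᵀ = U)
    (hU₂ : etil q * U + U * (etil q)ᵀ = 0) :
    ∀ M : Matrix (Fin q) (Fin q) ℝ,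
      Matrix.trace (Uᵀ * ((pascal q)ᵀ * M * pascal q * etil q + (etil q)ᵀ * M)) = 0 :=
  trace_transpose_mul_add_eq_zero_of_commute (commute_pascal_etil q) hU₁ hU₂
end

section
/- A matrix X ∈ ℝ^{3×3} satisfies X Ẽ_3 + Ẽ_3ᵀ X = 0 if and only if there exist ξ_1, ξ_2, ξ_3 ∈ ℝ such that X = [[0, 0, 2ξ_1], [0, −ξ_1, ξ_2], [2ξ_1, −ξ_2, ξ_3]]. In particular, the kernel of the linear map X ↦ X Ẽ_3 + Ẽ_3ᵀ X on ℝ^{3×3} is three-dimensional. -/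
open Matrix

/-- The nilpotent matrix `Ẽ_3 ∈ ℝ^{3×3}` with only nonzero entries
`(Ẽ_3)_{12} = 1` and `(Ẽ_3)_{23} = 2`. -/
noncomputable def etil3 : Matrix (Fin 3) (Fin 3) ℝ := !![0, 1, 0; 0, 0, 2; 0, 0, 0]

/-- The linear map `X ↦ X Ẽ_3 + Ẽ_3ᵀ X` on `ℝ^{3×3}`. -/
noncomputable def sylvMap : Matrix (Fin 3) (Fin 3) ℝ →ₗ[ℝ] Matrix (Fin 3) (Fin 3) ℝ where
  toFun X := X * etil3 + etil3ᵀ * X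
  map_add' X Y := by simp only [add_mul, mul_add]; abel
  map_smul' c X := by simp [smul_mul_assoc, mul_smul_comm]

theorem mul_etil3_add_transpose_mul (X : Matrix (Fin 3) (Fin 3) ℝ) :
    X * etil3 + etil3ᵀ * X =
      !![0, X 0 0, 2 * X 0 1;
        X 0 0, X 1 0 + X 0 1, 2 * X 1 1 + X 0 2;
        2 * X 1 0, X 2 0 + 2 * X 1 1, 2 * X 2 1 + 2 * X 1 2] := by
  ext i j
  fin_cases i <;> fin_cases j <;> simp [etil3, mul_apply, Fin.sum_univ_three] <;> ring

theorem mul_etil3_add_transpose_mul_eq_zero_iff (X : Matrix (Fin 3) (Fin 3) ℝ) :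
    X * etil3 + etil3ᵀ * X = 0 ↔
      ∃ ξ₁ ξ₂ ξ₃ : ℝ, X = !![0, 0, 2 * ξ₁; 0, -ξ₁, ξ₂; 2 * ξ₁, -ξ₂, ξ₃] := by
  rw [mul_etil3_add_transpose_mul, ← Matrix.ext_iff]
  simp only [Fin.forall_fin_succ, of_apply, cons_val', cons_val_fin_one, cons_val_zero,
    cons_val_succ, Matrix.zero_apply, forall_const, mul_eq_zero, OfNat.ofNat_ne_zero, false_or,
    true_and]
  constructor
  · rintro ⟨⟨h00, h01⟩, ⟨-, h10, h02⟩, -, h20, h21⟩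
    refine ⟨-X 1 1, X 1 2, X 2 2, ?_⟩
    ext i j
    fin_cases i <;> fin_cases j <;> simp <;> linarith
  · rintro ⟨ξ₁, ξ₂, ξ₃, rfl⟩
    simp

noncomputable def sylvKernelParam : (Fin 3 → ℝ) →ₗ[ℝ] Matrix (Fin 3) (Fin 3) ℝ where
  toFun ξ := !![0, 0, 2 * ξ 0; 0, -ξ 0, ξ 1; 2 * ξ 0, -ξ 1, ξ 2]
  map_add' ξ η := by ext i j; fin_cases i <;> fin_cases j <;> simp <;> ring
  map_smul' c ξ := by ext i j; fin_cases i <;> fin_cases j <;> simp <;> ring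

theorem sylvKernelParam_injective : Function.Injective sylvKernelParam := by
  refine Function.LeftInverse.injective (g := fun X => ![-X 1 1, X 1 2, X 2 2]) fun ξ => ?_
  ext i
  fin_cases i <;> simp [sylvKernelParam]

theorem ker_sylvMap_eq_range : LinearMap.ker sylvMap = LinearMap.range sylvKernelParam := by
  ext X
  change X * etil3 + etil3ᵀ * X = 0 ↔ _
  rw [mul_etil3_add_transpose_mul_eq_zero_iff]
  constructor
  · rintro ⟨ξ₁, ξ₂, ξ₃, rfl⟩
    exact ⟨![ξ₁, ξ₂, ξ₃], rfl⟩
  · rintro ⟨ξ, rfl⟩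
    exact ⟨ξ 0, ξ 1, ξ 2, rfl⟩

/-- `X Ẽ_3 + Ẽ_3ᵀ X = 0` iff `X` has the form
`[[0, 0, 2ξ₁], [0, -ξ₁, ξ₂], [2ξ₁, -ξ₂, ξ₃]]`; in particular the kernel of
`X ↦ X Ẽ_3 + Ẽ_3ᵀ X` is three-dimensional. -/
theorem stmt15 :
    (∀ X : Matrix (Fin 3) (Fin 3) ℝ,
        X * etil3 + etil3ᵀ * X = 0 ↔
          ∃ ξ₁ ξ₂ ξ₃ : ℝ, X = !![0, 0, 2 * ξ₁; 0, -ξ₁, ξ₂; 2 * ξ₁, -ξ₂, ξ₃]) ∧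
      Module.finrank ℝ (LinearMap.ker sylvMap) = 3 := by
  refine ⟨mul_etil3_add_transpose_mul_eq_zero_iff, ?_⟩
  rw [ker_sylvMap_eq_range, LinearMap.finrank_range_of_inj sylvKernelParam_injective,
    Module.finrank_fin_fun]
end

section
/- Let s = 3 and let the nodes be c = (c_2 − d_1, c_2, c_2 + d_3) with d_1 ≠ 0, d_3 ≠ 0 and d_1 + d_3 ≠ 0 (so the nodes are pairwise distinct). Consider the linear map X ↦ 𝒫_3ᵀ (V_3ᵀ X V_3) 𝒫_3 − V_3ᵀ X V_3 on ℝ^{3×3}. There exists a nonzero lower triangular matrix X in the kernel of this map if and only if d_1 = d_3; and in the case d_1 = d_3 the lower triangular kernel elements are exactly the real scalar multiples of the matrix [[1,0,0],[−3,1,0],[3,−3,1]]. -/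
/-!
Because `𝒫` has entries `C(j, i)`, the binomial theorem gives `V(c) 𝒫 = V(c + 1)`: `X` lies in the
kernel iff the bilinear form `(p, q) ↦ ∑ X i j * p (c i) * q (c j)` on polynomials of degree `< 3`
is invariant under the shift `x ↦ x + 1`. For lower triangular `X` this is a linear system in six
unknowns; written in the centred basis `(x - c₂)^k` it no longer involves `c₂`, and elimination
leaves `(d₁ - d₃) * X 0 0 = 0` and `X = X 0 0 • N` with `N = [[1,0,0],[-3,1,0],[3,-3,1]]`, which
does lie in the kernel when `d₁ = d₃`.
-/

open Matrix

theorem vand_mul_pascal {s q : ℕ} (c : Fin s → ℝ) :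
    vand c q * pascal q = vand (fun i => c i + 1) q := by
  ext i j
  simp only [vand, pascal, mul_apply, of_apply]
  rw [add_pow, Fin.sum_univ_eq_sum_range (fun k => c i ^ k * ((j : ℕ).choose k : ℝ))]
  refine (Finset.sum_subset (Finset.range_subset_range.mpr j.isLt) fun k _ hk => ?_).symm.trans ?_
  · simp [Nat.choose_eq_zero_of_lt (by simpa using hk : (j : ℕ) < k)]
  · simp

noncomputable def steinMap {s : ℕ} (c : Fin s → ℝ) (q : ℕ) (X : Matrix (Fin s) (Fin s) ℝ) :
    Matrix (Fin q) (Fin q) ℝ :=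
  (pascal q)ᵀ * ((vand c q)ᵀ * X * vand c q) * pascal q - (vand c q)ᵀ * X * vand c q

theorem steinMap_eq {s q : ℕ} (c : Fin s → ℝ) (X : Matrix (Fin s) (Fin s) ℝ) :
    steinMap c q X = (vand (fun i => c i + 1) q)ᵀ * X * vand (fun i => c i + 1) q
      - (vand c q)ᵀ * X * vand c q := by
  simp only [steinMap, ← vand_mul_pascal, transpose_mul, Matrix.mul_assoc]

theorem steinMap_apply {s q : ℕ} (c : Fin s → ℝ) (X : Matrix (Fin s) (Fin s) ℝ) (k l : Fin q) :
    steinMap c q X k l = ∑ i, ∑ j, X i j *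
      ((c i + 1) ^ (k : ℕ) * (c j + 1) ^ (l : ℕ) - c i ^ (k : ℕ) * c j ^ (l : ℕ)) := by
  simp only [steinMap_eq, Matrix.sub_apply, mul_apply, transpose_apply, vand, of_apply,
    Finset.sum_mul, ← Finset.sum_sub_distrib]
  rw [Finset.sum_comm]
  refine Finset.sum_congr rfl fun i _ => Finset.sum_congr rfl fun j _ => by ring

theorem steinMap_smul {s q : ℕ} (c : Fin s → ℝ) (t : ℝ) (X : Matrix (Fin s) (Fin s) ℝ) :
    steinMap c q (t • X) = t • steinMap c q X := by
  simp only [steinMap, Matrix.mul_smul, Matrix.smul_mul, smul_sub]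

section ThreeNodes

variable {c₂ d₁ d₃ : ℝ} {X : Matrix (Fin 3) (Fin 3) ℝ}

theorem lowerTriangular_relations_of_steinMap_eq_zero (hd₁ : d₁ ≠ 0) (hd₃ : d₃ ≠ 0)
    (hd : d₁ + d₃ ≠ 0)
    (hlow : ∀ i j : Fin 3, i < j → X i j = 0) (hX : steinMap ![c₂ - d₁, c₂, c₂ + d₃] 3 X = 0) :
    X 0 0 + X 1 0 + X 1 1 + X 2 0 + X 2 1 + X 2 2 = 0 ∧
    d₃ * X 2 2 = d₁ * (X 0 0 + X 1 0 + X 2 0) ∧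
    d₃ * (X 2 0 + X 2 1 + X 2 2) = d₁ * X 0 0 ∧
    X 1 0 + X 2 0 = 0 ∧
    2 * d₃ * X 2 0 = 3 * (d₁ + d₃) * X 0 0 ∧
    (d₁ - d₃) * X 0 0 = 0 := by
  have entry (k l : Fin 3) := (steinMap_apply _ X k l).symm.trans (congrFun (congrFun hX k) l)
  have h01 := entry 0 1
  have h02 := entry 0 2
  have h11 := entry 1 1
  have h20 := entry 2 0
  have h12 := entry 1 2
  have h21 := entry 2 1
  have h22 := entry 2 2
  simp only [Fin.sum_univ_three, hlow 0 1 (by decide), hlow 0 2 (by decide), hlow 1 2 (by decide),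
    Matrix.zero_apply, cons_val_zero, cons_val_one, cons_val, Fin.val_zero, Fin.val_one,
    Fin.val_two]
    at h01 h02 h11 h20 h12 h21 h22
  set a := X 0 0
  set b := X 1 0
  set c := X 1 1
  set d := X 2 0
  set e := X 2 1
  set f := X 2 2
  -- the powers of `c₂` below re-expand the entries in the centred basis `(x - c₂)^k`
  have hsum : a + b + c + d + e + f = 0 := by linear_combination h01
  have hmomCol : d₃ * f = d₁ * (a + b + d) := by
    linear_combination h02 / 2 - (1 / 2 + c₂) * h01
  have hmomRow : d₃ * (d + e + f) = d₁ * a := by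
    linear_combination h20 / 2 - (1 / 2 + c₂) * h01
  have hbd' : d₁ * d₃ * (d₁ + d₃) * (b + d) = 0 := by
    linear_combination d₃ * (h12 - h21 - c₂ * (h02 - h20)) - (d₃ + d₃ ^ 2) * (hmomCol - hmomRow)
  have hbd : b + d = 0 := by simpa [hd₁, hd₃, hd] using hbd'
  have hda' : d₁ * d₃ * (2 * d₃ * d - 3 * (d₁ + d₃) * a) = 0 := by
    linear_combination -(d₃ * (h21 - c₂ * h20 - 2 * c₂ * h11 + 3 * c₂ ^ 2 * h01 - h01)
      - (d₃ + 2 * d₃ ^ 2) * hmomCol - (2 * d₃ + d₃ ^ 2) * hmomRow) + 2 * d₁ * d₃ ^ 2 * hbd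
  have hda : 2 * d₃ * d = 3 * (d₁ + d₃) * a := by
    linear_combination (by simpa [hd₁, hd₃] using hda' : 2 * d₃ * d - 3 * (d₁ + d₃) * a = 0)
  have ha' : d₁ * (d₁ + d₃) * ((d₁ - d₃) * a) = 0 := by
    linear_combination -(h22 - 2 * c₂ * (h12 + h21) + c₂ ^ 2 * (h02 + h20 + 4 * h11)
      - (4 * c₂ ^ 3 + 1) * h01 - (4 * d₃ ^ 2 + 5 * d₃ + 2) * hmomCol - (d₃ + 2) * hmomRow
      - d₁ * (4 * d₃ ^ 2 + 5 * d₃ + d₁) * hbd - d₁ * (d₁ - d₃ - 2) * hda)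
  exact ⟨hsum, hmomCol, hmomRow, hbd, hda, by simpa [hd₁, hd] using ha'⟩

theorem eq_smul_of_steinMap_eq_zero (hd₁ : d₁ ≠ 0) (hd₃ : d₃ ≠ 0) (hd : d₁ + d₃ ≠ 0)
    (hlow : ∀ i j : Fin 3, i < j → X i j = 0) (hX : steinMap ![c₂ - d₁, c₂, c₂ + d₃] 3 X = 0) :
    (d₁ - d₃) * X 0 0 = 0 ∧ X = X 0 0 • !![(1:ℝ), 0, 0; -3, 1, 0; 3, -3, 1] := by
  obtain ⟨hsum, hmomCol, hmomRow, hbd, hda, ha⟩ :=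
    lowerTriangular_relations_of_steinMap_eq_zero hd₁ hd₃ hd hlow hX
  have h20 : X 2 0 = 3 * X 0 0 :=
    mul_left_cancel₀ (mul_ne_zero two_ne_zero hd₃) (by linear_combination hda + 3 * ha)
  have h22 : X 2 2 = X 0 0 := mul_left_cancel₀ hd₃ (by linear_combination hmomCol + d₁ * hbd + ha)
  have h21 : X 2 1 = -3 * X 0 0 :=
    mul_left_cancel₀ hd₃ (by linear_combination hmomRow - d₃ * h20 - d₃ * h22 + ha)
  have h10 : X 1 0 = -3 * X 0 0 := by linear_combination hbd - h20
  have h11 : X 1 1 = X 0 0 := by linear_combination hsum - h10 - h20 - h21 - h22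
  refine ⟨ha, ?_⟩
  ext i j
  fin_cases i <;> fin_cases j <;> simp [hlow, h10, h11, h20, h21, h22, mul_comm]

theorem steinMap_binomial_eq_zero (h : d₁ = d₃) :
    steinMap ![c₂ - d₁, c₂, c₂ + d₃] 3 !![(1:ℝ), 0, 0; -3, 1, 0; 3, -3, 1] = 0 := by
  subst h
  ext k l
  rw [steinMap_apply]
  fin_cases k <;> fin_cases l <;> simp only [Fin.sum_univ_three, of_apply, cons_val', cons_val_zero,
    cons_val_one, cons_val, cons_val_fin_one, Matrix.zero_apply] <;> ring

end ThreeNodes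

/-- for `s = 3` and nodes `c = (c₂-d₁, c₂, c₂+d₃)` with
`d₁, d₃, d₁+d₃ ≠ 0`, the linear map `X ↦ 𝒫₃ᵀ(V₃ᵀ X V₃)𝒫₃ - V₃ᵀ X V₃` has a
nonzero lower triangular kernel element iff `d₁ = d₃`, in which case the lower
triangular kernel elements are exactly the scalar multiples of
`[[1,0,0],[-3,1,0],[3,-3,1]]`. -/
theorem stmt16 (c₂ d₁ d₃ : ℝ) (hd₁ : d₁ ≠ 0) (hd₃ : d₃ ≠ 0) (hd : d₁ + d₃ ≠ 0) :
    ((∃ X : Matrix (Fin 3) (Fin 3) ℝ, X ≠ 0 ∧ (∀ i j : Fin 3, i < j → X i j = 0) ∧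
        (pascal 3)ᵀ * ((vand ![c₂ - d₁, c₂, c₂ + d₃] 3)ᵀ * X * vand ![c₂ - d₁, c₂, c₂ + d₃] 3)
            * pascal 3
          - (vand ![c₂ - d₁, c₂, c₂ + d₃] 3)ᵀ * X * vand ![c₂ - d₁, c₂, c₂ + d₃] 3 = 0) ↔
      d₁ = d₃) ∧
    (d₁ = d₃ →
      ∀ X : Matrix (Fin 3) (Fin 3) ℝ,
        ((∀ i j : Fin 3, i < j → X i j = 0) ∧
          (pascal 3)ᵀ * ((vand ![c₂ - d₁, c₂, c₂ + d₃] 3)ᵀ * X * vand ![c₂ - d₁, c₂, c₂ + d₃] 3)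
              * pascal 3
            - (vand ![c₂ - d₁, c₂, c₂ + d₃] 3)ᵀ * X * vand ![c₂ - d₁, c₂, c₂ + d₃] 3 = 0) ↔
          ∃ t : ℝ, X = t • !![(1:ℝ), 0, 0; -3, 1, 0; 3, -3, 1]) := by
  have hNlow (t : ℝ) (i j : Fin 3) (hij : i < j) :
      (t • !![(1:ℝ), 0, 0; -3, 1, 0; 3, -3, 1]) i j = 0 := by
    fin_cases i <;> fin_cases j <;> simp_all
  refine ⟨⟨fun ⟨X, hX0, hXlow, hX⟩ => ?_, fun h => ?_⟩, fun h X => ⟨fun ⟨hXlow, hX⟩ => ?_, ?_⟩⟩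
  · obtain ⟨hdeg, hXN⟩ := eq_smul_of_steinMap_eq_zero hd₁ hd₃ hd hXlow hX
    have ha : X 0 0 ≠ 0 := fun ha => hX0 (by rw [hXN, ha, zero_smul])
    exact sub_eq_zero.mp ((mul_eq_zero.mp hdeg).resolve_right ha)
  · refine ⟨_, fun h0 => ?_, by simpa using hNlow 1, steinMap_binomial_eq_zero h⟩
    simpa using congrFun (congrFun h0 0) 0
  · exact ⟨_, (eq_smul_of_steinMap_eq_zero hd₁ hd₃ hd hXlow hX).2⟩
  · rintro ⟨t, rfl⟩
    exact ⟨hNlow t, by rw [← steinMap, steinMap_smul, steinMap_binomial_eq_zero h, smul_zero]⟩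
end
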